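/- Let X and Y be Banach spaces, F : X → Set Y a set-valued mapping, q ≥ 1, g : X → Y strictly differentiable at x̄ with derivative A = ∇g(x̄) (a continuous linear map X → Y), and ȳ ∈ g(x̄) + F(x̄). Then the mapping x ↦ g(x) + F(x) is strongly metrically q-subregular at (x̄, ȳ) if and only if the partial linearization G : x ↦ g(x̄) + A(x − x̄) + F(x) is strongly metrically q-subregular at (x̄, ȳ); moreover, the exact strong q-subregularity bounds of these two mappings at (x̄, ȳ) coincide. -/
import Mathlib


open Metric

/-- Strong metric q-subregularity of `H` at `(x̄, ȳ)`. -/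
def StrongQSubreg {X Y : Type*} [NormedAddCommGroup X] [NormedAddCommGroup Y]
    (H : X → Set Y) (xb : X) (yb : Y) (q : ℝ) : Prop :=
  ∃ η > (0 : ℝ), ∃ γ > (0 : ℝ), ∀ x ∈ closedBall xb γ, ∀ y ∈ H x,
    ‖x - xb‖ ≤ η * ‖y - yb‖ ^ q

/-- The exact strong q-subregularity bound of `H` at `(x̄, ȳ)`. -/
noncomputable def ssubregBound {X Y : Type*} [NormedAddCommGroup X] [NormedAddCommGroup Y]
    (H : X → Set Y) (xb : X) (yb : Y) (q : ℝ) : ℝ :=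
  sInf {η : ℝ | 0 < η ∧ ∃ γ > (0 : ℝ), ∀ x ∈ closedBall xb γ, ∀ y ∈ H x,
    ‖x - xb‖ ≤ η * ‖y - yb‖ ^ q}

/-- Key transfer lemma: if `H2` is strongly q-subregular with constant `η` and `H1` is a
perturbation of `H2` by a function `r` small near `xb` (in the sense that
`y ∈ H1 x → y - r x ∈ H2 x`), then `H1` is strongly q-subregular with any constant `η' > η`. -/
lemma key_transfer {X Y : Type*} [NormedAddCommGroup X] [NormedAddCommGroup Y]
    (H1 H2 : X → Set Y) (xb : X) (yb : Y) (r : X → Y)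
    (hmem : ∀ x, ∀ y ∈ H1 x, y - r x ∈ H2 x)
    (hr : ∀ ε > (0 : ℝ), ∃ ρ > (0 : ℝ), ∀ x ∈ closedBall xb ρ, ‖r x‖ ≤ ε * ‖x - xb‖)
    (q : ℝ) (hq : 1 ≤ q) {η η' : ℝ} (hη0 : 0 < η) (hlt : η < η')
    (hsub : ∃ γ > (0 : ℝ), ∀ x ∈ closedBall xb γ, ∀ y ∈ H2 x, ‖x - xb‖ ≤ η * ‖y - yb‖ ^ q) :
    ∃ γ > (0 : ℝ), ∀ x ∈ closedBall xb γ, ∀ y ∈ H1 x, ‖x - xb‖ ≤ η' * ‖y - yb‖ ^ q := by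
  obtain ⟨γ₂, hγ₂, h₂⟩ := hsub
  have hq0 : (0 : ℝ) < q := lt_of_lt_of_le one_pos hq
  set θ : ℝ := (η' / η) ^ q⁻¹ - 1 with hθdef
  have hratio : 1 < η' / η := (one_lt_div hη0).2 hlt
  have hθ : 0 < θ := by
    have : 1 < (η' / η) ^ q⁻¹ :=
      (Real.one_lt_rpow_iff_of_pos (by positivity)).2 (Or.inl ⟨hratio, by positivity⟩)
    simpa [hθdef] using sub_pos.2 this
  have hθq : η * (1 + θ) ^ q = η' := by
    have h1θ : (1 + θ : ℝ) = (η' / η) ^ q⁻¹ := by simp [hθdef]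
    have : ((η' / η) ^ q⁻¹) ^ q = η' / η := by
      rw [← Real.rpow_mul (by positivity), inv_mul_cancel₀ hq0.ne', Real.rpow_one]
    rw [h1θ, this]
    field_simp
  set ε : ℝ := (1 / (2 * η)) ^ q⁻¹ / (1 + 1 / θ) with hεdef
  have h1θ' : (0 : ℝ) < 1 + 1 / θ := by positivity
  have hε : 0 < ε := by
    apply div_pos (Real.rpow_pos_of_pos (by positivity) _) h1θ'
  have hεq : η * (ε * (1 + 1 / θ)) ^ q = 1 / 2 := by
    have h1 : ε * (1 + 1 / θ) = (1 / (2 * η)) ^ q⁻¹ := by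
      rw [hεdef]; field_simp
    rw [h1, ← Real.rpow_mul (by positivity), inv_mul_cancel₀ hq0.ne', Real.rpow_one]
    field_simp
  obtain ⟨ρ, hρ, hrρ⟩ := hr ε hε
  refine ⟨min 1 (min γ₂ ρ), by positivity, fun x hx y hy => ?_⟩
  have hx1 : ‖x - xb‖ ≤ 1 := by
    have := mem_closedBall.mp hx
    rw [dist_eq_norm] at this
    exact this.trans (min_le_left _ _)
  have hx2 : x ∈ closedBall xb γ₂ :=
    closedBall_subset_closedBall ((min_le_right _ _).trans (min_le_left _ _)) hx
  have hx3 : x ∈ closedBall xb ρ :=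
    closedBall_subset_closedBall ((min_le_right _ _).trans (min_le_right _ _)) hx
  have hy' : y - r x ∈ H2 x := hmem x y hy
  have h1 : ‖x - xb‖ ≤ η * ‖y - r x - yb‖ ^ q := h₂ x hx2 _ hy'
  have hrx : ‖r x‖ ≤ ε * ‖x - xb‖ := hrρ x hx3
  have hb : ‖y - r x - yb‖ ≤ ‖y - yb‖ + ε * ‖x - xb‖ := by
    have heq : y - r x - yb = (y - yb) + (-(r x)) := by abel
    calc ‖y - r x - yb‖ = ‖(y - yb) + (-(r x))‖ := by rw [heq]
      _ ≤ ‖y - yb‖ + ‖-(r x)‖ := norm_add_le _ _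
      _ = ‖y - yb‖ + ‖r x‖ := by rw [norm_neg]
      _ ≤ ‖y - yb‖ + ε * ‖x - xb‖ := by linarith
  by_cases hcase : ε * ‖x - xb‖ ≤ θ * ‖y - yb‖
  · have hb2 : ‖y - r x - yb‖ ≤ (1 + θ) * ‖y - yb‖ := by nlinarith
    calc ‖x - xb‖ ≤ η * ‖y - r x - yb‖ ^ q := h1
      _ ≤ η * ((1 + θ) * ‖y - yb‖) ^ q :=
          mul_le_mul_of_nonneg_left
            (Real.rpow_le_rpow (norm_nonneg _) hb2 hq0.le) hη0.le
      _ = η * ((1 + θ) ^ q * ‖y - yb‖ ^ q) := by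
          rw [Real.mul_rpow (by positivity) (norm_nonneg _)]
      _ = (η * (1 + θ) ^ q) * ‖y - yb‖ ^ q := by ring
      _ = η' * ‖y - yb‖ ^ q := by rw [hθq]
  · push_neg at hcase
    have hyy : ‖y - yb‖ ≤ ε * ‖x - xb‖ / θ := by
      have := hcase.le
      rw [mul_comm θ _] at this
      exact (le_div_iff₀ hθ).2 this
    have hb3 : ‖y - r x - yb‖ ≤ (ε * (1 + 1 / θ)) * ‖x - xb‖ := by
      have : ε * ‖x - xb‖ / θ + ε * ‖x - xb‖ = (ε * (1 + 1 / θ)) * ‖x - xb‖ := by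
        field_simp; ring
      linarith [hb, hyy]
    have h2 : ‖x - xb‖ ≤ (1 / 2) * ‖x - xb‖ ^ q := by
      calc ‖x - xb‖ ≤ η * ‖y - r x - yb‖ ^ q := h1
        _ ≤ η * ((ε * (1 + 1 / θ)) * ‖x - xb‖) ^ q :=
            mul_le_mul_of_nonneg_left
              (Real.rpow_le_rpow (norm_nonneg _) hb3 hq0.le) hη0.le
        _ = (η * (ε * (1 + 1 / θ)) ^ q) * ‖x - xb‖ ^ q := by
            rw [Real.mul_rpow (by positivity) (norm_nonneg _)]; ring
        _ = (1 / 2) * ‖x - xb‖ ^ q := by rw [hεq]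
    have hpow : ‖x - xb‖ ^ q ≤ ‖x - xb‖ := by
      rcases eq_or_lt_of_le (norm_nonneg (x - xb)) with h0 | h0
      · rw [← h0, Real.zero_rpow hq0.ne']
      · calc ‖x - xb‖ ^ q ≤ ‖x - xb‖ ^ (1 : ℝ) :=
              Real.rpow_le_rpow_of_exponent_ge h0 hx1 hq
          _ = ‖x - xb‖ := Real.rpow_one _
    have hzero : ‖x - xb‖ ≤ 0 := by linarith
    have hη' : (0 : ℝ) < η' := hη0.trans hlt
    have : (0 : ℝ) ≤ η' * ‖y - yb‖ ^ q := by positivity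
    linarith [norm_nonneg (x - xb)]

/-- for `g` strictly differentiable at `x̄`, strong metric
q-subregularity of `g + F` is equivalent to that of its partial linearization
`G : x ↦ g(x̄) + ∇g(x̄)(x - x̄) + F(x)`, with the same exact bound. -/
theorem strong_q_subregularity_smooth_perturbation
    {X Y : Type*} [NormedAddCommGroup X] [NormedSpace ℝ X] [CompleteSpace X]
    [NormedAddCommGroup Y] [NormedSpace ℝ Y] [CompleteSpace Y]
    (F : X → Set Y) (q : ℝ) (hq : 1 ≤ q)
    (g : X → Y) (xb : X) (A : X →L[ℝ] Y) (hg : HasStrictFDerivAt g A xb)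
    (yb : Y) (hyb : yb ∈ (fun w => g xb + w) '' F xb) :
    (StrongQSubreg (fun x => (fun w => g x + w) '' F x) xb yb q ↔
      StrongQSubreg (fun x => (fun w => g xb + A (x - xb) + w) '' F x) xb yb q) ∧
    ssubregBound (fun x => (fun w => g x + w) '' F x) xb yb q =
      ssubregBound (fun x => (fun w => g xb + A (x - xb) + w) '' F x) xb yb q := by
  set H1 : X → Set Y := fun x => (fun w => g x + w) '' F x with hH1
  set H2 : X → Set Y := fun x => (fun w => g xb + A (x - xb) + w) '' F x with hH2
  set r : X → Y := fun x => g x - g xb - A (x - xb) with hrdef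
  -- smallness of the remainder
  have hrsmall : ∀ ε > (0 : ℝ), ∃ ρ > (0 : ℝ), ∀ x ∈ closedBall xb ρ, ‖r x‖ ≤ ε * ‖x - xb‖ := by
    intro ε hε
    have hlo : (fun x => g x - g xb - A (x - xb)) =o[nhds xb] fun x => x - xb :=
      hg.hasFDerivAt.isLittleO
    have hev := hlo.def hε
    rw [Metric.eventually_nhds_iff] at hev
    obtain ⟨ρ, hρ, hball⟩ := hev
    refine ⟨ρ / 2, by positivity, fun x hx => ?_⟩
    have : dist x xb < ρ := lt_of_le_of_lt (mem_closedBall.mp hx) (by linarith)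
    simpa [hrdef] using hball this
  have hrsmall' : ∀ ε > (0 : ℝ), ∃ ρ > (0 : ℝ), ∀ x ∈ closedBall xb ρ,
      ‖(fun x => -(r x)) x‖ ≤ ε * ‖x - xb‖ := by
    intro ε hε
    obtain ⟨ρ, hρ, h⟩ := hrsmall ε hε
    exact ⟨ρ, hρ, fun x hx => by simpa using h x hx⟩
  have hmem12 : ∀ x, ∀ y ∈ H1 x, y - r x ∈ H2 x := by
    rintro x y ⟨w, hw, rfl⟩
    exact ⟨w, hw, by simp [hrdef]; abel⟩
  have hmem21 : ∀ x, ∀ y ∈ H2 x, y - (fun x => -(r x)) x ∈ H1 x := by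
    rintro x y ⟨w, hw, rfl⟩
    exact ⟨w, hw, by simp [hrdef]; abel⟩
  -- transfer statements
  have key12 : ∀ {η η' : ℝ}, 0 < η → η < η' →
      (∃ γ > (0 : ℝ), ∀ x ∈ closedBall xb γ, ∀ y ∈ H2 x, ‖x - xb‖ ≤ η * ‖y - yb‖ ^ q) →
      (∃ γ > (0 : ℝ), ∀ x ∈ closedBall xb γ, ∀ y ∈ H1 x, ‖x - xb‖ ≤ η' * ‖y - yb‖ ^ q) :=
    fun hη0 hlt hsub => key_transfer H1 H2 xb yb r hmem12 hrsmall q hq hη0 hlt hsub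
  have key21 : ∀ {η η' : ℝ}, 0 < η → η < η' →
      (∃ γ > (0 : ℝ), ∀ x ∈ closedBall xb γ, ∀ y ∈ H1 x, ‖x - xb‖ ≤ η * ‖y - yb‖ ^ q) →
      (∃ γ > (0 : ℝ), ∀ x ∈ closedBall xb γ, ∀ y ∈ H2 x, ‖x - xb‖ ≤ η' * ‖y - yb‖ ^ q) :=
    fun hη0 hlt hsub =>
      key_transfer H2 H1 xb yb (fun x => -(r x)) hmem21 hrsmall' q hq hη0 hlt hsub
  set S1 : Set ℝ := {η : ℝ | 0 < η ∧ ∃ γ > (0 : ℝ), ∀ x ∈ closedBall xb γ, ∀ y ∈ H1 x,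
    ‖x - xb‖ ≤ η * ‖y - yb‖ ^ q} with hS1
  set S2 : Set ℝ := {η : ℝ | 0 < η ∧ ∃ γ > (0 : ℝ), ∀ x ∈ closedBall xb γ, ∀ y ∈ H2 x,
    ‖x - xb‖ ≤ η * ‖y - yb‖ ^ q} with hS2
  have h21 : ∀ η ∈ S2, ∀ η' > η, η' ∈ S1 := by
    rintro η ⟨hη0, hsub⟩ η' hlt
    exact ⟨hη0.trans hlt, key12 hη0 hlt hsub⟩
  have h12 : ∀ η ∈ S1, ∀ η' > η, η' ∈ S2 := by
    rintro η ⟨hη0, hsub⟩ η' hlt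
    exact ⟨hη0.trans hlt, key21 hη0 hlt hsub⟩
  have bdd1 : BddBelow S1 := ⟨0, fun η hη => hη.1.le⟩
  have bdd2 : BddBelow S2 := ⟨0, fun η hη => hη.1.le⟩
  have hle : ∀ (S T : Set ℝ), BddBelow S → (∀ η ∈ T, ∀ η' > η, η' ∈ S) →
      ∀ η ∈ T, sInf S ≤ η := by
    intro S T hbdd htrans η hη
    by_contra hcon
    push_neg at hcon
    obtain ⟨c, hc1, hc2⟩ := exists_between hcon
    exact absurd (csInf_le hbdd (htrans η hη c hc1)) (not_le.2 hc2)
  have hne : S1.Nonempty ↔ S2.Nonempty := by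
    constructor
    · rintro ⟨η, hη⟩
      exact ⟨η + 1, h12 η hη (η + 1) (lt_add_one η)⟩
    · rintro ⟨η, hη⟩
      exact ⟨η + 1, h21 η hη (η + 1) (lt_add_one η)⟩
  constructor
  · constructor
    · rintro ⟨η, hη0, hsub⟩
      obtain ⟨η', hη'⟩ := hne.mp ⟨η, hη0, hsub⟩
      exact ⟨η', hη'.1, hη'.2⟩
    · rintro ⟨η, hη0, hsub⟩
      obtain ⟨η', hη'⟩ := hne.mpr ⟨η, hη0, hsub⟩
      exact ⟨η', hη'.1, hη'.2⟩
  · show sInf S1 = sInf S2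
    rcases Set.eq_empty_or_nonempty S2 with h2e | h2ne
    · have h1e : S1 = ∅ := by
        apply Set.eq_empty_iff_forall_notMem.2
        intro z hz
        obtain ⟨w, hw⟩ := hne.mp ⟨z, hz⟩
        rw [h2e] at hw
        simp at hw
      rw [h1e, h2e]
    · have h1ne : S1.Nonempty := hne.mpr h2ne
      exact le_antisymm (le_csInf h2ne (hle S1 S2 bdd1 h21))
        (le_csInf h1ne (hle S2 S1 bdd2 h12))
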